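/- Let m ≥ 1 be an integer, α ∈ (0,1], L ≥ 0, and K ≥ 1, and set r = K^{−1/m}/2. Let A = [0,1]^m ⊆ ℝ^m with Lebesgue measure. For each a′ ∈ A, let ν_{a′} denote the uniform probability measure on the set B_∞(a′, r) ∩ A, where B_∞(a′, r) = { x ∈ ℝ^m : ‖x − a′‖_∞ ≤ r }. Given a probability measure π on A, define the smoothed measure π_K on A by π_K(E) = ∫_A ν_{a′}(E) dπ(a′) for measurable E ⊆ A (i.e. π_K is the bind of π with the kernel a′ ↦ ν_{a′}). Then for every measurable f : A → [0,1] satisfying |f(x) − f(y)| ≤ L ‖x − y‖₂^α for all x, y ∈ A, one has | ∫_A f dπ_K − ∫_A f dπ | ≤ √m · L · K^{−α/m}. -/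

import Mathlib

/-!
The smoothed measure is `κ ∘ₘ π` for the kernel `κ a'` = uniform law on `B_∞(a', r) ∩ A`,
which is a probability measure for every `a' ∈ A`. Hence
`∫ f dπ_K - ∫ f dπ = ∫ (∫ (f x - f a') dκ a'(x)) dπ(a')`, and on the support of `κ a'` the
Euclidean distance `‖x - a'‖` is at most `√m r`, so Hölder continuity bounds the integrand by
`L (√m r)^α = L (√m / 2)^α K^{-α/m} ≤ √m L K^{-α/m}`.
-/

open MeasureTheory

/-- The unit cube `[0,1]^m` in Euclidean space `ℝ^m`. -/
def euclideanUnitCube (m : ℕ) : Set (EuclideanSpace ℝ (Fin m)) :=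
  {a | ∀ i, a i ∈ Set.Icc (0 : ℝ) 1}

/-- The `ℓ∞` ball of radius `r` around `a'` in `ℝ^m`. -/
def linftyBall (m : ℕ) (a' : EuclideanSpace ℝ (Fin m)) (r : ℝ) :
    Set (EuclideanSpace ℝ (Fin m)) :=
  {x | ∀ i, |x i - a' i| ≤ r}

open ProbabilityTheory Set

namespace MeasureTheory.Measure

variable {α β E : Type*} [MeasurableSpace α] [MeasurableSpace β]
  [NormedAddCommGroup E] [NormedSpace ℝ E]

lemma isProbabilityMeasure_comp_of_ae {μ : Measure α} [IsProbabilityMeasure μ]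
    {κ : Kernel α β} (hκ : ∀ᵐ a ∂μ, IsProbabilityMeasure (κ a)) :
    IsProbabilityMeasure (κ ∘ₘ μ) := by
  constructor
  rw [bind_apply MeasurableSet.univ κ.aemeasurable]
  calc ∫⁻ a, κ a univ ∂μ = ∫⁻ _, 1 ∂μ := lintegral_congr_ae (hκ.mono fun _ _ => measure_univ)
    _ = 1 := by simp

lemma integral_comp {μ : Measure α} {κ : Kernel α β} {f : β → E}
    (hf : Integrable f (κ ∘ₘ μ)) : ∫ x, f x ∂(κ ∘ₘ μ) = ∫ a, ∫ x, f x ∂κ a ∂μ := by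
  rw [comp_eq_comp_const_apply] at hf ⊢
  exact Kernel.integral_comp hf

lemma integrable_integral_comp {μ : Measure α} {κ : Kernel α β} {f : β → E}
    (hf : Integrable f (κ ∘ₘ μ)) : Integrable (fun a => ∫ x, f x ∂κ a) μ := by
  rw [comp_eq_comp_const_apply] at hf
  exact hf.integral_comp

lemma norm_integral_comp_sub_integral_le [CompleteSpace E] {μ : Measure α}
    [IsProbabilityMeasure μ] {κ : Kernel α α} {f : α → E} {C : ℝ}
    (hκ : ∀ᵐ a ∂μ, IsProbabilityMeasure (κ a))
    (hfμ : Integrable f μ) (hfκμ : Integrable f (κ ∘ₘ μ))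
    (hC : ∀ᵐ a ∂μ, ∀ᵐ x ∂κ a, ‖f x - f a‖ ≤ C) :
    ‖∫ x, f x ∂(κ ∘ₘ μ) - ∫ x, f x ∂μ‖ ≤ C := by
  have hmean : ∀ᵐ a ∂μ, ‖∫ x, f x ∂κ a - f a‖ ≤ C := by
    filter_upwards [hκ, hC, ae_integrable_of_integrable_comp hfκμ] with a hκa hCa hfa
    have hcentre : ∫ x, f x ∂κ a - f a = ∫ x, (f x - f a) ∂κ a := by
      rw [integral_sub hfa (integrable_const _), integral_const, probReal_univ, one_smul]
    simpa [hcentre] using norm_integral_le_of_norm_le_const hCa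
  rw [integral_comp hfκμ, ← integral_sub (integrable_integral_comp hfκμ) hfμ]
  simpa using norm_integral_le_of_norm_le_const hmean

end MeasureTheory.Measure

lemma measurable_cond_of_measurableSet_setOf_mem {α β : Type*} [MeasurableSpace α]
    [MeasurableSpace β] {ν : Measure β} [SFinite ν] {s : α → Set β}
    (hs : MeasurableSet {p : α × β | p.2 ∈ s p.1}) :
    Measurable fun a => ν[|s a] := by
  refine Measure.measurable_of_measurable_coe _ fun E hE => ?_
  have hs_meas (a : α) : MeasurableSet (s a) := measurable_prodMk_left hs
  simp_rw [cond_apply (hs_meas _)]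
  exact (measurable_measure_prodMk_left hs).inv.mul
    (measurable_measure_prodMk_left (hs.inter (measurable_snd hE)))

lemma EuclideanSpace.norm_le_sqrt_card_mul {ι : Type*} [Fintype ι] {x : EuclideanSpace ℝ ι}
    {r : ℝ} (hr : 0 ≤ r) (hx : ∀ i, |x i| ≤ r) : ‖x‖ ≤ √(Fintype.card ι) * r := by
  rw [EuclideanSpace.norm_eq, ← Real.sqrt_sq hr, ← Real.sqrt_mul (Nat.cast_nonneg _)]
  gcongr
  calc ∑ i, ‖x i‖ ^ 2 ≤ ∑ _ : ι, r ^ 2 := Finset.sum_le_sum fun i _ => by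
        rw [Real.norm_eq_abs]; exact pow_le_pow_left₀ (abs_nonneg _) (hx i) 2
    _ = Fintype.card ι * r ^ 2 := by simp

lemma Real.rpow_sqrt_natCast_div_two_le (m : ℕ) {α : ℝ} (hα0 : 0 < α) (hα1 : α ≤ 1) :
    (√m / 2) ^ α ≤ √m := by
  rcases Nat.eq_zero_or_pos m with rfl | hm
  · simp [Real.zero_rpow hα0.ne']
  have hsqrt : 1 ≤ √(m : ℝ) := Real.one_le_sqrt.2 (by exact_mod_cast hm)
  rcases le_total (√m / 2) 1 with h | h
  · exact (Real.rpow_le_one (by positivity) h hα0.le).trans hsqrt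
  · calc (√m / 2) ^ α ≤ (√m / 2) ^ (1 : ℝ) := Real.rpow_le_rpow_of_exponent_le h hα1
      _ ≤ √m := by rw [Real.rpow_one]; linarith

lemma mul_rpow_sqrt_mul_radius_le (m : ℕ) {α L K : ℝ} (hα0 : 0 < α) (hα1 : α ≤ 1)
    (hL : 0 ≤ L) (hK : 0 < K) :
    L * (√m * (K ^ (-(1 : ℝ) / m) / 2)) ^ α ≤ √m * L * K ^ (-(α / m)) := by
  have hKα : (K ^ (-(1 : ℝ) / m)) ^ α = K ^ (-(α / m)) := by
    rw [← Real.rpow_mul hK.le]; ring_nf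
  have hsplit : √m * (K ^ (-(1 : ℝ) / m) / 2) = √m / 2 * K ^ (-(1 : ℝ) / m) := by ring
  rw [hsplit, Real.mul_rpow (by positivity) (by positivity), hKα, mul_left_comm, ← mul_assoc]
  gcongr
  exact Real.rpow_sqrt_natCast_div_two_le m hα0 hα1

lemma abs_sub_le_of_mem_linftyBall {m : ℕ} {s : Set (EuclideanSpace ℝ (Fin m))}
    {f : EuclideanSpace ℝ (Fin m) → ℝ} {α L r : ℝ} (hα : 0 ≤ α) (hL : 0 ≤ L) (hr : 0 ≤ r)
    (hf : ∀ x ∈ s, ∀ y ∈ s, |f x - f y| ≤ L * ‖x - y‖ ^ α)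
    {x a : EuclideanSpace ℝ (Fin m)} (hx : x ∈ s) (ha : a ∈ s) (hxa : x ∈ linftyBall m a r) :
    |f x - f a| ≤ L * (√m * r) ^ α := by
  refine (hf x hx a ha).trans ?_
  gcongr
  simpa using EuclideanSpace.norm_le_sqrt_card_mul (x := x - a) hr fun i => by
    simpa using hxa i

section UnitCube

variable {m : ℕ}

lemma linftyBall_inter_euclideanUnitCube (a' : EuclideanSpace ℝ (Fin m)) (r : ℝ) :
    linftyBall m a' r ∩ euclideanUnitCube m
      = WithLp.ofLp ⁻¹' univ.pi fun i => Icc (max (a' i - r) 0) (min (a' i + r) 1) := by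
  ext x
  simp only [linftyBall, euclideanUnitCube, mem_inter_iff, mem_ofPred_eq, mem_preimage,
    mem_univ_pi, mem_Icc, ← forall_and, abs_sub_le_iff, max_le_iff, le_min_iff]
  refine forall_congr' fun i => ?_
  constructor <;> intro h <;> refine ⟨⟨?_, ?_⟩, ?_, ?_⟩ <;> linarith

lemma volume_linftyBall_inter_euclideanUnitCube (a' : EuclideanSpace ℝ (Fin m)) (r : ℝ) :
    volume (linftyBall m a' r ∩ euclideanUnitCube m)
      = ∏ i, ENNReal.ofReal (min (a' i + r) 1 - max (a' i - r) 0) := by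
  rw [linftyBall_inter_euclideanUnitCube, (PiLp.volume_preserving_ofLp _).measure_preimage
    (MeasurableSet.univ_pi fun _ => measurableSet_Icc).nullMeasurableSet, volume_pi_pi]
  simp only [Real.volume_Icc]

lemma volume_linftyBall_inter_euclideanUnitCube_ne_top (a' : EuclideanSpace ℝ (Fin m))
    (r : ℝ) : volume (linftyBall m a' r ∩ euclideanUnitCube m) ≠ ⊤ := by
  rw [volume_linftyBall_inter_euclideanUnitCube]
  exact ENNReal.prod_ne_top fun _ _ => ENNReal.ofReal_ne_top

lemma volume_linftyBall_inter_euclideanUnitCube_ne_zero {a' : EuclideanSpace ℝ (Fin m)}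
    (ha' : a' ∈ euclideanUnitCube m) {r : ℝ} (hr : 0 < r) :
    volume (linftyBall m a' r ∩ euclideanUnitCube m) ≠ 0 := by
  rw [volume_linftyBall_inter_euclideanUnitCube, Finset.prod_ne_zero_iff]
  intro i _
  obtain ⟨h0, h1⟩ := ha' i
  rw [ENNReal.ofReal_ne_zero_iff, sub_pos, max_lt_iff, lt_min_iff, lt_min_iff]
  refine ⟨⟨?_, ?_⟩, ?_, ?_⟩ <;> linarith

lemma measurableSet_euclideanUnitCube : MeasurableSet (euclideanUnitCube m) :=
  measurableSet_setOfPred.2 <| Measurable.forall fun _ =>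
    measurableSet_setOfPred.1 <| measurableSet_Icc.preimage (by fun_prop)

lemma measurableSet_setOf_mem_linftyBall_inter_euclideanUnitCube (r : ℝ) :
    MeasurableSet {p : EuclideanSpace ℝ (Fin m) × EuclideanSpace ℝ (Fin m) |
      p.2 ∈ linftyBall m p.1 r ∩ euclideanUnitCube m} :=
  measurableSet_setOfPred.2 <| .and
    (Measurable.forall fun _ => measurableSet_setOfPred.1 <|
      measurableSet_le (by fun_prop) measurable_const)
    (Measurable.forall fun _ => measurableSet_setOfPred.1 <|
      measurableSet_Icc.preimage (by fun_prop))

/-- `volume[|s]` unfolds to `(volume s)⁻¹ • volume.restrict s`, so composing this kernel with `π`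
is literally the smoothed measure `π_K` of the statement. -/
noncomputable def cubeSmoothingKernel (m : ℕ) (r : ℝ) :
    Kernel (EuclideanSpace ℝ (Fin m)) (EuclideanSpace ℝ (Fin m)) where
  toFun a' := volume[|linftyBall m a' r ∩ euclideanUnitCube m]
  measurable' := measurable_cond_of_measurableSet_setOf_mem
    (measurableSet_setOf_mem_linftyBall_inter_euclideanUnitCube r)

lemma isProbabilityMeasure_cubeSmoothingKernel {a' : EuclideanSpace ℝ (Fin m)}
    (ha' : a' ∈ euclideanUnitCube m) {r : ℝ} (hr : 0 < r) :
    IsProbabilityMeasure (cubeSmoothingKernel m r a') :=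
  cond_isProbabilityMeasure_of_finite (volume_linftyBall_inter_euclideanUnitCube_ne_zero ha' hr)
    (volume_linftyBall_inter_euclideanUnitCube_ne_top a' r)

lemma ae_mem_cubeSmoothingKernel (a' : EuclideanSpace ℝ (Fin m)) (r : ℝ) :
    ∀ᵐ x ∂cubeSmoothingKernel m r a', x ∈ linftyBall m a' r ∩ euclideanUnitCube m :=
  ae_cond_mem <| measurable_prodMk_left
    (measurableSet_setOf_mem_linftyBall_inter_euclideanUnitCube r)

end UnitCube

theorem smoothed_policy_expectation_general (m : ℕ)
    (α : ℝ) (hα0 : 0 < α) (hα1 : α ≤ 1) (L : ℝ) (hL : 0 ≤ L)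
    (K : ℝ) (hK : 1 ≤ K)
    (π : Measure (EuclideanSpace ℝ (Fin m))) [IsProbabilityMeasure π]
    (hπ : π (euclideanUnitCube m) = 1)
    (f : EuclideanSpace ℝ (Fin m) → ℝ) (hf_meas : Measurable f)
    (hf01 : ∀ x ∈ euclideanUnitCube m, f x ∈ Set.Icc (0 : ℝ) 1)
    (hfHolder : ∀ x ∈ euclideanUnitCube m, ∀ y ∈ euclideanUnitCube m,
      |f x - f y| ≤ L * ‖x - y‖ ^ α) :
    |(∫ x, f x ∂(π.bind (fun a' =>
          (volume (linftyBall m a' (K ^ (-(1 : ℝ) / m) / 2) ∩ euclideanUnitCube m))⁻¹ •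
            volume.restrict
              (linftyBall m a' (K ^ (-(1 : ℝ) / m) / 2) ∩ euclideanUnitCube m))))
        - ∫ x, f x ∂π|
      ≤ Real.sqrt m * L * K ^ (-(α / m)) := by
  have hK0 : 0 < K := one_pos.trans_le hK
  set r := K ^ (-(1 : ℝ) / m) / 2
  have hr : 0 < r := by positivity
  set κ := cubeSmoothingKernel m r
  have hπ_cube : ∀ᵐ a ∂π, a ∈ euclideanUnitCube m := by
    rwa [ae_mem_iff_measure_eq measurableSet_euclideanUnitCube.nullMeasurableSet, measure_univ]
  have hκ : ∀ᵐ a ∂π, IsProbabilityMeasure (κ a) :=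
    hπ_cube.mono fun a ha => isProbabilityMeasure_cubeSmoothingKernel ha hr
  have hκπ_cube : ∀ᵐ x ∂(κ ∘ₘ π), x ∈ euclideanUnitCube m :=
    Measure.ae_comp_of_ae_ae measurableSet_euclideanUnitCube <|
      ae_of_all _ fun a => (ae_mem_cubeSmoothingKernel a r).mono fun _ hx => hx.2
  have hf_int {μ : Measure (EuclideanSpace ℝ (Fin m))} [IsFiniteMeasure μ]
      (hμ : ∀ᵐ x ∂μ, x ∈ euclideanUnitCube m) : Integrable f μ :=
    .of_bound hf_meas.aestronglyMeasurable 1 <| hμ.mono fun x hx => by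
      obtain ⟨h0, h1⟩ := hf01 x hx
      rw [Real.norm_eq_abs, abs_le]; constructor <;> linarith
  have : IsProbabilityMeasure (κ ∘ₘ π) := Measure.isProbabilityMeasure_comp_of_ae hκ
  refine (Measure.norm_integral_comp_sub_integral_le hκ (hf_int hπ_cube) (hf_int hκπ_cube)
    ?_).trans_eq' rfl
  filter_upwards [hπ_cube] with a ha
  filter_upwards [ae_mem_cubeSmoothingKernel a r] with x hx
  exact (abs_sub_le_of_mem_linftyBall hα0.le hL hr.le hfHolder hx.2 ha hx.1).trans
    (mul_rpow_sqrt_mul_radius_le m hα0 hα1 hL hK0)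

/-- **Lemma 7 (expectation under the smoothed policy).** Let `A = [0,1]^m`, `K ≥ 1`,
`r = K^{-1/m}/2`, and for `a' ∈ A` let `ν a'` be the uniform probability measure on
`B_∞(a', r) ∩ A`. For a probability measure `π` on `A`, the smoothed measure `π_K` is
the bind of `π` with `ν`. Then for every measurable `f : A → [0,1]` that is `α`-Hölder
continuous with constant `L` (w.r.t. the Euclidean norm),
`|∫ f dπ_K − ∫ f dπ| ≤ √m ⬝ L ⬝ K^{−α/m}`. -/
theorem smoothed_policy_expectation (m : ℕ) (hm : 1 ≤ m)
    (α : ℝ) (hα0 : 0 < α) (hα1 : α ≤ 1) (L : ℝ) (hL : 0 ≤ L)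
    (K : ℝ) (hK : 1 ≤ K)
    (π : Measure (EuclideanSpace ℝ (Fin m))) [IsProbabilityMeasure π]
    (hπ : π (euclideanUnitCube m) = 1)
    (f : EuclideanSpace ℝ (Fin m) → ℝ) (hf_meas : Measurable f)
    (hf01 : ∀ x ∈ euclideanUnitCube m, f x ∈ Set.Icc (0 : ℝ) 1)
    (hfHolder : ∀ x ∈ euclideanUnitCube m, ∀ y ∈ euclideanUnitCube m,
      |f x - f y| ≤ L * ‖x - y‖ ^ α) :
    |(∫ x, f x ∂(π.bind (fun a' =>
          (volume (linftyBall m a' (K ^ (-(1 : ℝ) / m) / 2) ∩ euclideanUnitCube m))⁻¹ •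
            volume.restrict
              (linftyBall m a' (K ^ (-(1 : ℝ) / m) / 2) ∩ euclideanUnitCube m))))
        - ∫ x, f x ∂π|
      ≤ Real.sqrt m * L * K ^ (-(α / m)) :=
  smoothed_policy_expectation_general m α hα0 hα1 L hL K hK π hπ f hf_meas hf01 hfHolder
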